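/- arXiv:2512.17131 — 3 statements merged into one kernel-verified Lean document; each statement's English description precedes it below -/
import Mathlib

section
/- Let μ ∈ [0,1), let γ_p > 0 and γ_m = (1-μ)γ_p. Consider the primal-averaging Nesterov iteration y_p^{(t)} = μ x_p^{(t)} + (1-μ) z_p^{(t)}, z_p^{(t+1)} = z_p^{(t)} - γ_p g^{(t)}(y_p^{(t)}), x_p^{(t+1)} = μ x_p^{(t)} + (1-μ) z_p^{(t+1)}, with z_p^{(1)} = x_p^{(1)}, and the modern Nesterov iteration b_m^{(t)} = μ b_m^{(t-1)} + g^{(t)}(x_m^{(t)}), x_m^{(t+1)} = x_m^{(t)} - γ_m (μ b_m^{(t)} + g^{(t)}(x_m^{(t)})), with b_m^{(0)} = 0 and x_m^{(1)} = x_p^{(1)}, where g^{(t)} : ℝ^n → ℝ^n is an arbitrary (gradient) map at step t. Then for all t ≥ 1: y_p^{(t)} = x_m^{(t)} and b_m^{(t)} = (x_p^{(t)} - x_p^{(t+1)}) / ((1-μ) γ_p). -/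
/-- Equivalence of the primal-averaging and modern formulations of Nesterov momentum
with constant learning rates `γp` and `γm = (1-μ)γp`. -/
theorem nesterov_primal_modern_equiv
    (n : ℕ) (μ γp γm : ℝ) (hμ0 : 0 ≤ μ) (hμ1 : μ < 1) (hγp : 0 < γp)
    (hγm : γm = (1 - μ) * γp)
    (g : ℕ → (Fin n → ℝ) → (Fin n → ℝ))
    (xp yp zp xm bm : ℕ → (Fin n → ℝ))
    (hyp : ∀ t ≥ 1, yp t = μ • xp t + (1 - μ) • zp t)
    (hzp : ∀ t ≥ 1, zp (t + 1) = zp t - γp • g t (yp t))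
    (hxp : ∀ t ≥ 1, xp (t + 1) = μ • xp t + (1 - μ) • zp (t + 1))
    (hinit : zp 1 = xp 1)
    (hbm0 : bm 0 = 0)
    (hbm : ∀ t ≥ 1, bm t = μ • bm (t - 1) + g t (xm t))
    (hxm : ∀ t ≥ 1, xm (t + 1) = xm t - γm • (μ • bm t + g t (xm t)))
    (hxm1 : xm 1 = xp 1) :
    ∀ t ≥ 1, yp t = xm t ∧ bm t = ((1 - μ) * γp)⁻¹ • (xp t - xp (t + 1)) := by
  have hne : (1 - μ) * γp ≠ 0 :=
    mul_ne_zero (by linarith) (ne_of_gt hγp)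
  have key : ∀ v : Fin n → ℝ, ((1 - μ) * γp)⁻¹ • (((1 - μ) * γp) • v) = v := by
    intro v; rw [smul_smul, inv_mul_cancel₀ hne, one_smul]
  subst hγm
  intro t ht
  induction t, ht using Nat.le_induction with
  | base =>
    have h1 : yp 1 = xp 1 := by
      rw [hyp 1 le_rfl, hinit]
      funext i
      simp only [Pi.add_apply, Pi.smul_apply, smul_eq_mul]
      ring
    refine ⟨by rw [h1, hxm1], ?_⟩
    have hx2 : xp 1 - xp (1 + 1) = ((1 - μ) * γp) • g 1 (yp 1) := by
      rw [hxp 1 le_rfl, hzp 1 le_rfl, hinit]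
      funext i
      simp only [Pi.sub_apply, Pi.add_apply, Pi.smul_apply, smul_eq_mul]
      ring
    rw [hx2, key, hbm 1 le_rfl, hbm0, hxm1, ← h1, smul_zero, zero_add]
  | succ t ht ih =>
    obtain ⟨ih1, ih2⟩ := ih
    have hb : xp t - xp (t + 1) = ((1 - μ) * γp) • bm t := by
      rw [ih2, smul_smul, mul_inv_cancel₀ hne, one_smul]
    have hb' : xp t - (μ • xp t + (1 - μ) • (zp t - γp • g t (yp t)))
        = ((1 - μ) * γp) • bm t := by
      rw [← hzp t ht, ← hxp t ht]; exact hb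
    have hg1 : yp (t + 1) = xm (t + 1) := by
      rw [hyp (t + 1) (by omega), hxp t ht, hzp t ht, hxm t ht, ← ih1]
      funext i
      have hbi := congrFun hb' i
      have e1i := congrFun (hyp t ht) i
      simp only [Pi.sub_apply, Pi.add_apply, Pi.smul_apply, smul_eq_mul] at hbi e1i ⊢
      linear_combination (-1 : ℝ) * e1i + (-μ) * hbi
    refine ⟨hg1, ?_⟩
    have hbmt : bm (t + 1) = μ • bm t + g (t + 1) (yp (t + 1)) := by
      have := hbm (t + 1) (by omega)
      rw [Nat.add_sub_cancel, ← hg1] at this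
      exact this
    have hx : xp (t + 1) - xp (t + 1 + 1) = ((1 - μ) * γp) • bm (t + 1) := by
      rw [hxp (t + 1) (by omega), hzp (t + 1) (by omega), hbmt,
        hxp t ht, hzp t ht]
      funext i
      have hbi := congrFun hb' i
      simp only [Pi.sub_apply, Pi.add_apply, Pi.smul_apply, smul_eq_mul] at hbi ⊢
      linear_combination μ * hbi
    rw [hx, key]
end

section
/- Let f : ℝ^n → ℝ be convex and differentiable and let the sequences (x^{(t)}), (y^{(t)}), (z^{(t)}) satisfy y^{(t)} = μ_y x^{(t)} + (1-μ_y) z^{(t)} with μ_y ∈ [0,1). Then for any x_*, ⟨∇f(x^{(t)}), z^{(t)} - x^{(t)}⟩ ≤ -(μ_y/(1-μ_y)) B_f(x^{(t)}, y^{(t)}) - (1/(1-μ_y)) B_f(y^{(t)}, x^{(t)}) + f(x_*) - f(x^{(t)}) + ⟨∇f(y^{(t)}), z^{(t)} - x_*⟩, where B_f(a,b) = f(a) - f(b) - ⟨∇f(b), a - b⟩ is the Bregman divergence. -/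
/-!
Since `y - x = (1 - μy) (z - x)` and `z - y = μy / (1 - μy) (y - x)`, the right-hand side minus the
left-hand side is, identically in `f` and `f'`, the Bregman divergence `B_f(x_*, y)`; this is
nonnegative by the first-order characterization of convexity.
-/

open RealInnerProductSpace

/-- Bregman divergence of `f` with gradient map `f'`. -/
noncomputable def bregman {n : ℕ} (f : EuclideanSpace ℝ (Fin n) → ℝ)
    (f' : EuclideanSpace ℝ (Fin n) → EuclideanSpace ℝ (Fin n))
    (a b : EuclideanSpace ℝ (Fin n)) : ℝ :=
  f a - f b - ⟪f' b, a - b⟫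

theorem ConvexOn.add_fderiv_sub_le {E : Type*} [NormedAddCommGroup E] [NormedSpace ℝ E]
    {s : Set E} {f : E → ℝ} {f' : E →L[ℝ] ℝ} {a b : E} (hf : ConvexOn ℝ s f)
    (ha : a ∈ s) (hb : b ∈ s) (hf' : HasFDerivAt f f' b) :
    f b + f' (a - b) ≤ f a := by
  set ℓ : ℝ →ᵃ[ℝ] E := AffineMap.lineMap b a
  have hderiv : HasDerivAt (f ∘ ℓ) (f' (a - b)) 0 :=
    hf'.comp_hasDerivAt_of_eq 0 AffineMap.hasDerivAt_lineMap (by simp [ℓ])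
  have hslope := (hf.comp_affineMap ℓ).le_slope_of_hasDerivAt
    (x := 0) (y := 1) (by simpa [ℓ] using hb) (by simpa [ℓ] using ha) zero_lt_one hderiv
  simp only [ℓ, slope_def_field, Function.comp_apply, AffineMap.lineMap_apply_zero,
    AffineMap.lineMap_apply_one, sub_zero, div_one] at hslope
  linarith

theorem ConvexOn.add_inner_gradient_sub_le {E : Type*} [NormedAddCommGroup E]
    [InnerProductSpace ℝ E] [CompleteSpace E] {s : Set E} {f : E → ℝ} {g a b : E}
    (hf : ConvexOn ℝ s f) (ha : a ∈ s) (hb : b ∈ s) (hg : HasGradientAt f g b) :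
    f b + ⟪g, a - b⟫ ≤ f a := by
  simpa using hf.add_fderiv_sub_le ha hb (hasGradientAt_iff_hasFDerivAt.mp hg)

theorem bregman_nonneg {n : ℕ} {f : EuclideanSpace ℝ (Fin n) → ℝ}
    {f' : EuclideanSpace ℝ (Fin n) → EuclideanSpace ℝ (Fin n)}
    {a b : EuclideanSpace ℝ (Fin n)} (hconv : ConvexOn ℝ Set.univ f)
    (hgrad : HasGradientAt f (f' b) b) : 0 ≤ bregman f f' a b := by
  have := hconv.add_inner_gradient_sub_le (Set.mem_univ a) (Set.mem_univ b) hgrad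
  rw [bregman]
  linarith

theorem bregman_interpolation_eq {n : ℕ} (f : EuclideanSpace ℝ (Fin n) → ℝ)
    (f' : EuclideanSpace ℝ (Fin n) → EuclideanSpace ℝ (Fin n)) {μ : ℝ} (hμ : μ ≠ 1)
    {x y z : EuclideanSpace ℝ (Fin n)} (hy : y = μ • x + (1 - μ) • z)
    (xstar : EuclideanSpace ℝ (Fin n)) :
    -(μ / (1 - μ)) * bregman f f' x y - (1 / (1 - μ)) * bregman f f' y x
        + f xstar - f x + ⟪f' y, z - xstar⟫
      = ⟪f' x, z - x⟫ + bregman f f' xstar y := by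
  have hμ' : 1 - μ ≠ 0 := sub_ne_zero.mpr hμ.symm
  subst hy
  simp only [bregman, inner_sub_right, inner_add_right, real_inner_smul_right]
  field_simp
  ring

theorem gpa_inner_product_bound_general
    (n : ℕ) (μy : ℝ) (hμy1 : μy < 1)
    (f : EuclideanSpace ℝ (Fin n) → ℝ) (f' : EuclideanSpace ℝ (Fin n) → EuclideanSpace ℝ (Fin n))
    (hgrad : ∀ p, HasGradientAt f (f' p) p)
    (hconv : ConvexOn ℝ Set.univ f)
    (x y z xstar : EuclideanSpace ℝ (Fin n))
    (hy : y = μy • x + (1 - μy) • z) :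
    ⟪f' x, z - x⟫ ≤
      -(μy / (1 - μy)) * bregman f f' x y - (1 / (1 - μy)) * bregman f f' y x
        + f xstar - f x + ⟪f' y, z - xstar⟫ := by
  rw [bregman_interpolation_eq f f' hμy1.ne hy]
  linarith [bregman_nonneg (a := xstar) hconv (hgrad y)]

/-- The key inequality bounding `⟨∇f(x), z - x⟩` via Bregman divergences when
`y = μy x + (1-μy) z`. -/
theorem gpa_inner_product_bound
    (n : ℕ) (μy : ℝ) (hμy0 : 0 ≤ μy) (hμy1 : μy < 1)
    (f : EuclideanSpace ℝ (Fin n) → ℝ) (f' : EuclideanSpace ℝ (Fin n) → EuclideanSpace ℝ (Fin n))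
    (hgrad : ∀ p, HasGradientAt f (f' p) p)
    (hconv : ConvexOn ℝ Set.univ f)
    (x y z xstar : EuclideanSpace ℝ (Fin n))
    (hy : y = μy • x + (1 - μy) • z) :
    ⟪f' x, z - x⟫ ≤
      -(μy / (1 - μy)) * bregman f f' x y - (1 / (1 - μy)) * bregman f f' y x
        + f xstar - f x + ⟪f' y, z - xstar⟫ :=
  gpa_inner_product_bound_general n μy hμy1 f f' hgrad hconv x y z xstar hy
end

section
/- Under the conditions of the GPA convergence theorem, if the base optimizer satisfies the regret bound Σ_{t=1}^T ⟨∇F(y^{(t)}), z^{(t)} - x_*⟩ ≤ C√T for some constant C ≥ 0, then F(x̄^{(T)}) - F(x_*) ≤ C/√T + (μ_x/(1-μ_x)) (F(x^{(1)}) - F(x_*))/T, i.e., F(x̄^{(T)}) - F(x_*) = O(1/√T). -/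
/-! With `a t = F (x t) - F x⋆`, each GPA step satisfies
`a t - μx a (t - 1) ≤ (1 - μx) ⟪∇F (y t), z t - x⋆⟫`: since `y t` is a convex combination of
`x (t - 1)` and `z t`, the vector `z t - x⋆` splits into multiples of `y t - x⋆` and
`y t - x (t - 1)`, on which the gradient inequality at `y t` applies, and `F (x t)` is bounded by
convexity because `x t` is a convex combination of `x (t - 1)` and `y t`. Summing over `t`
telescopes to `(1 - μx) ∑ a t ≤ (1 - μx) · regret + μx a 1`, and Jensen's inequality for the
average iterate gives the rate once the regret is at most `C √T`. -/

open RealInnerProductSpace Finset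

theorem sum_Icc_sub_mul_pred (a : ℕ → ℝ) (μ : ℝ) (T : ℕ) :
    ∑ t ∈ Icc 1 T, (a t - μ * a (t - 1)) = (1 - μ) * ∑ t ∈ Icc 1 T, a t + μ * (a T - a 0) := by
  induction T with
  | zero => simp
  | succ T ih =>
    rw [sum_Icc_succ_top (by omega), sum_Icc_succ_top (by omega), ih, Nat.add_sub_cancel]
    ring

theorem ConvexOn.map_one_div_card_smul_sum_le {ι E : Type*} [AddCommGroup E] [Module ℝ E]
    {F : E → ℝ} (hF : ConvexOn ℝ Set.univ F) {s : Finset ι} (hs : s.Nonempty) (x : ι → E) :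
    F ((1 / (#s : ℝ)) • ∑ i ∈ s, x i) ≤ (∑ i ∈ s, F (x i)) / #s := by
  have hcard : (0 : ℝ) < #s := by exact_mod_cast hs.card_pos
  have h := hF.map_sum_le (t := s) (w := fun _ => 1 / (#s : ℝ)) (p := x)
    (fun _ _ => by positivity) (by simp [hcard.ne']) (fun _ _ => Set.mem_univ _)
  simpa [← smul_sum, ← mul_sum, div_eq_inv_mul] using h

section

variable {E : Type*} [NormedAddCommGroup E] [InnerProductSpace ℝ E] [CompleteSpace E]

theorem ConvexOn.sub_le_inner_of_hasGradientAt {F : E → ℝ} {g p : E}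
    (hF : ConvexOn ℝ Set.univ F) (hg : HasGradientAt F g p) (u : E) :
    F p - F u ≤ ⟪g, p - u⟫ := by
  set γ : ℝ →ᵃ[ℝ] E := AffineMap.lineMap p u with hγ_def
  have hline : ConvexOn ℝ Set.univ (F ∘ γ) := by
    simpa using hF.comp_affineMap γ
  have hderiv : HasDerivAt (F ∘ γ) ⟪g, u - p⟫ 0 := by
    have hγ : HasDerivAt (fun θ : ℝ => γ θ) (u - p) 0 := by
      simpa [hγ_def, AffineMap.lineMap_apply_module'] using
        ((hasDerivAt_id (0 : ℝ)).smul_const (u - p)).add_const p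
    have hF' : HasFDerivAt F (InnerProductSpace.toDual ℝ E g) (γ 0) := by
      simpa [hγ_def] using hg.hasFDerivAt
    simpa using hF'.comp_hasDerivAt (0 : ℝ) hγ
  have hslope := hline.le_slope_of_hasDerivAt (Set.mem_univ 0) (Set.mem_univ 1) one_pos hderiv
  simp only [hγ_def, slope_def_field, Function.comp_apply, AffineMap.lineMap_apply_one,
    AffineMap.lineMap_apply_zero, sub_zero, div_one] at hslope
  rw [← neg_sub u p, inner_neg_right]
  linarith

theorem gpa_step_le {F : E → ℝ} {g x x' y z xstar : E} {μx μy : ℝ}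
    (hμx0 : 0 ≤ μx) (hμx1 : μx < 1) (hμy0 : 0 ≤ μy) (hμy1 : μy < 1)
    (hF : ConvexOn ℝ Set.univ F) (hg : HasGradientAt F g y)
    (hx' : x' = μx • x + (1 - μx) • z) (hy : y = μy • x' + (1 - μy) • z) :
    F x' - F xstar - μx * (F x - F xstar) ≤ (1 - μx) * ⟪g, z - xstar⟫ := by
  set d := 1 - μx * μy with hd_def
  have hd : 0 < d := by nlinarith
  -- `y = (μx * μy) • x + d • z`, so `x'` is a convex combination of `x` and `y`
  have hz : d • (z - xstar) = d • (y - xstar) + (μx * μy) • (y - x) := by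
    subst hy hx'; module
  have hx'y : (μx * (1 - μy) / d) • x + ((1 - μx) / d) • y = x' := by
    subst hy hx'
    match_scalars <;> field_simp <;> ring
  have hjensen : d * F x' ≤ μx * (1 - μy) * F x + (1 - μx) * F y := by
    have ha : 0 ≤ μx * (1 - μy) / d := div_nonneg (mul_nonneg hμx0 (by linarith)) hd.le
    have hb : 0 ≤ (1 - μx) / d := div_nonneg (by linarith) hd.le
    have h := hF.2 (Set.mem_univ x) (Set.mem_univ y) ha hb (by field_simp; rw [hd_def]; ring)
    rw [hx'y, smul_eq_mul, smul_eq_mul] at h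
    calc d * F x' ≤ d * (μx * (1 - μy) / d * F x + (1 - μx) / d * F y) := by gcongr
      _ = μx * (1 - μy) * F x + (1 - μx) * F y := by field_simp
  have hgrad : d * (F y - F xstar) + μx * μy * (F y - F x) ≤ d * ⟪g, z - xstar⟫ := by
    have h := congrArg (⟪g, ·⟫) hz
    simp only [inner_add_right, real_inner_smul_right] at h
    rw [h]
    gcongr
    · exact hF.sub_le_inner_of_hasGradientAt hg xstar
    · exact hF.sub_le_inner_of_hasGradientAt hg x
  refine le_of_mul_le_mul_left ?_ hd
  linarith [mul_le_mul_of_nonneg_left hgrad (by linarith : (0:ℝ) ≤ 1 - μx)]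


theorem gpa_average_gap_le {F : E → ℝ} {F' : E → E} {μx μy : ℝ}
    (hμx0 : 0 ≤ μx) (hμx1 : μx < 1) (hμy0 : 0 ≤ μy) (hμy1 : μy < 1)
    (hgrad : ∀ p, HasGradientAt F (F' p) p) (hF : ConvexOn ℝ Set.univ F)
    {xstar : E} (hmin : ∀ p, F xstar ≤ F p) {x y z : ℕ → E}
    (hy : ∀ t ≥ 1, y t = μy • x t + (1 - μy) • z t)
    (hx : ∀ t ≥ 1, x (t + 1) = μx • x t + (1 - μx) • z (t + 1))
    (hinit : z 1 = x 1) (hx0 : x 0 = x 1) {T : ℕ} (hT : 1 ≤ T) :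
    F ((1 / (T : ℝ)) • ∑ t ∈ Icc 1 T, x t) - F xstar ≤
      (∑ t ∈ Icc 1 T, ⟪F' (y t), z t - xstar⟫) / T +
        μx / (1 - μx) * (F (x 1) - F xstar) / T := by
  set a : ℕ → ℝ := fun t => F (x t) - F xstar with ha
  -- `z 1 = x 1 = x 0` makes the recursion hold at `t = 1` too
  have hrec : ∀ t ≥ 1, x t = μx • x (t - 1) + (1 - μx) • z t := by
    rintro (_ | _ | t) ht
    · omega
    · simp only [zero_add, Nat.sub_self, hinit, hx0]
      module
    · exact hx (t + 1) (by omega)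
  have hstep : ∀ t ∈ Icc 1 T, a t - μx * a (t - 1) ≤ (1 - μx) * ⟪F' (y t), z t - xstar⟫ :=
    fun t ht => gpa_step_le hμx0 hμx1 hμy0 hμy1 hF (hgrad _) (hrec t (mem_Icc.1 ht).1)
      (hy t (mem_Icc.1 ht).1)
  have hsum : (1 - μx) * ∑ t ∈ Icc 1 T, a t ≤
      (1 - μx) * ∑ t ∈ Icc 1 T, ⟪F' (y t), z t - xstar⟫ + μx * a 1 := by
    have h := sum_le_sum hstep
    rw [sum_Icc_sub_mul_pred, ← mul_sum, show a 0 = a 1 by simp [ha, hx0]] at h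
    linarith [mul_nonneg hμx0 (sub_nonneg.2 (hmin (x T)))]
  have hT' : (0 : ℝ) < T := by exact_mod_cast hT
  have hjensen := hF.map_one_div_card_smul_sum_le ⟨1, mem_Icc.2 ⟨le_rfl, hT⟩⟩ x
  simp only [Nat.card_Icc, Nat.add_sub_cancel] at hjensen
  calc F ((1 / (T : ℝ)) • ∑ t ∈ Icc 1 T, x t) - F xstar
      ≤ (∑ t ∈ Icc 1 T, a t) / T := by
        simp only [ha, sum_sub_distrib, sum_const, Nat.card_Icc, Nat.add_sub_cancel, nsmul_eq_mul]
        rw [sub_div, mul_div_cancel_left₀ _ hT'.ne']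
        linarith
    _ ≤ (∑ t ∈ Icc 1 T, ⟪F' (y t), z t - xstar⟫ + μx / (1 - μx) * a 1) / T := by
        gcongr
        have h1x : 0 < 1 - μx := by linarith
        exact le_of_mul_le_mul_left (hsum.trans_eq (by field_simp)) h1x
    _ = _ := add_div _ _ _

end

theorem gpa_convergence_rate_general
    (n : ℕ) (μx μy : ℝ) (hμx0 : 0 ≤ μx) (hμx1 : μx < 1) (hμy0 : 0 ≤ μy) (hμy1 : μy < 1)
    (F : EuclideanSpace ℝ (Fin n) → ℝ)
    (F' : EuclideanSpace ℝ (Fin n) → EuclideanSpace ℝ (Fin n))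
    (hgrad : ∀ p, HasGradientAt F (F' p) p)
    (hconv : ConvexOn ℝ Set.univ F)
    (xstar : EuclideanSpace ℝ (Fin n)) (hmin : ∀ p, F xstar ≤ F p)
    (x y z : ℕ → EuclideanSpace ℝ (Fin n))
    (hy : ∀ t ≥ 1, y t = μy • x t + (1 - μy) • z t)
    (hx : ∀ t ≥ 1, x (t + 1) = μx • x t + (1 - μx) • z (t + 1))
    (hinit : z 1 = x 1) (hconv0 : x 0 = x 1)
    (T : ℕ) (hT : 1 ≤ T)
    (C : ℝ)
    (hregret : ∑ t ∈ Finset.Icc 1 T, ⟪F' (y t), z t - xstar⟫ ≤ C * Real.sqrt T) :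
    F ((1 / (T : ℝ)) • ∑ t ∈ Finset.Icc 1 T, x t) - F xstar ≤
      C / Real.sqrt T + (μx / (1 - μx)) * (F (x 1) - F xstar) / T := by
  calc F ((1 / (T : ℝ)) • ∑ t ∈ Finset.Icc 1 T, x t) - F xstar
      ≤ (∑ t ∈ Icc 1 T, ⟪F' (y t), z t - xstar⟫) / T + μx / (1 - μx) * (F (x 1) - F xstar) / T :=
        gpa_average_gap_le hμx0 hμx1 hμy0 hμy1 hgrad hconv hmin hy hx hinit hconv0 hT
    _ ≤ C * Real.sqrt T / T + μx / (1 - μx) * (F (x 1) - F xstar) / T := by gcongr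
    _ = C / Real.sqrt T + μx / (1 - μx) * (F (x 1) - F xstar) / T := by
        rw [mul_div_assoc, Real.sqrt_div_self', mul_one_div]

/-- Corollary: if the base optimizer has regret `≤ C√T`, then GPA's average iterate
converges at rate `O(1/√T)`. -/
theorem gpa_convergence_rate
    (n : ℕ) (μx μy : ℝ) (hμx0 : 0 ≤ μx) (hμx1 : μx < 1) (hμy0 : 0 ≤ μy) (hμy1 : μy < 1)
    (F : EuclideanSpace ℝ (Fin n) → ℝ)
    (F' : EuclideanSpace ℝ (Fin n) → EuclideanSpace ℝ (Fin n))
    (hgrad : ∀ p, HasGradientAt F (F' p) p)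
    (hconv : ConvexOn ℝ Set.univ F)
    (xstar : EuclideanSpace ℝ (Fin n)) (hmin : ∀ p, F xstar ≤ F p)
    (x y z : ℕ → EuclideanSpace ℝ (Fin n))
    (hy : ∀ t ≥ 1, y t = μy • x t + (1 - μy) • z t)
    (hx : ∀ t ≥ 1, x (t + 1) = μx • x t + (1 - μx) • z (t + 1))
    (hinit : z 1 = x 1) (hconv0 : x 0 = x 1)
    (T : ℕ) (hT : 1 ≤ T)
    (C : ℝ) (hC : 0 ≤ C)
    (hregret : ∑ t ∈ Finset.Icc 1 T, ⟪F' (y t), z t - xstar⟫ ≤ C * Real.sqrt T) :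
    F ((1 / (T : ℝ)) • ∑ t ∈ Finset.Icc 1 T, x t) - F xstar ≤
      C / Real.sqrt T + (μx / (1 - μx)) * (F (x 1) - F xstar) / T :=
  gpa_convergence_rate_general n μx μy hμx0 hμx1 hμy0 hμy1 F F' hgrad hconv xstar hmin x y z hy hx
    hinit hconv0 T hT C hregret
end
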